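/- Let G be a finite group with Sylow p-subgroup P and suppose Q is a normal subgroup of G with P' ≤ Q ≤ Φ(P). If N_G(P) is p-nilpotent, then G is p-nilpotent. -/

import Mathlib

/-!
Since `P' ≤ Q`, the image `P̄` of `P` in `G ⧸ Q` is abelian. Because `N_G(P)` is `p`-nilpotent, its
normal `p`-complement centralizes `P`, so `N_G(P) = P · C_G(P)`; as `Q ≤ P`, this group maps onto
`N_{G/Q}(P̄)`, which therefore centralizes `P̄`. Burnside's transfer theorem gives a normal
`p`-complement `K / Q` of `G ⧸ Q`. By Schur–Zassenhaus the normal Sylow subgroup `Q` of `K` has a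
complement `H` in `K`, unique up to conjugacy in `K`, and the Frattini argument gives
`G = Q · N_G(H)`. Then `P = Q · N_P(H)`, and since `Q ≤ Φ(P)` this forces `P ≤ N_G(H)`, so
`N_G(H) ⊇ Q · N_G(H) = G`: `H` is a normal `p`-complement of `G`.
-/

/-- A group is `p`-nilpotent if it has a normal `p`-complement. -/
def IsPNilpotent (p : ℕ) (G : Type*) [Group G] : Prop :=
  ∃ (P : Sylow p G) (K : Subgroup G), K.Normal ∧ Subgroup.IsComplement' (P : Subgroup G) K

open Subgroup MulAction

namespace Subgroup

variable {G : Type*} [Group G]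

theorem card_subgroupOf_of_le {H K : Subgroup G} (h : H ≤ K) :
    Nat.card (H.subgroupOf K) = Nat.card H :=
  Nat.card_congr (subgroupOfEquivOfLe h).toEquiv

theorem map_map_conj {G' : Type*} [Group G'] (f : G →* G') (g : G) (K : Subgroup G) :
    (K.map (MulAut.conj g).toMonoidHom).map f
      = (K.map f).map (MulAut.conj (f g)).toMonoidHom := by
  rw [map_map, map_map]
  congr 1
  ext x
  simp

theorem map_conj_map_conj (a b : G) (K : Subgroup G) :
    (K.map (MulAut.conj b).toMonoidHom).map (MulAut.conj a).toMonoidHom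
      = K.map (MulAut.conj (a * b)).toMonoidHom := by
  rw [map_map, map_mul, MulAut.mul_def]; rfl

theorem map_conjNormal_map_subtype {K : Subgroup G} [K.Normal] (g : G) (A : Subgroup K) :
    (A.map (MulAut.conjNormal g).toMonoidHom).map K.subtype
      = (A.map K.subtype).map (MulAut.conj g).toMonoidHom := by
  rw [map_map, map_map]
  rfl

theorem map_conj_eq_self_of_normal (H : Subgroup G) [H.Normal] (g : G) :
    H.map (MulAut.conj g).toMonoidHom = H :=
  mem_normalizer_iff_map_conj_eq.mp (normalizer_eq_top_iff.mpr ‹_› ▸ mem_top g)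

theorem mem_normalizer_of_map_conj_eq {H : Subgroup G} {a b : G}
    (h : H.map (MulAut.conj a).toMonoidHom = H.map (MulAut.conj b).toMonoidHom) :
    a⁻¹ * b ∈ normalizer H := by
  refine mem_normalizer_iff_map_conj_eq.mpr ?_
  change H.map (MulAut.conj _).toMonoidHom = H
  rw [← map_conj_map_conj, ← h, map_conj_map_conj, inv_mul_cancel]
  ext; simp

theorem IsComplement'.le_sup_map_subtype {H K : Subgroup G} {B : Subgroup K}
    (h : IsComplement' (H.subgroupOf K) B) : K ≤ H ⊔ B.map K.subtype := by
  have := congrArg (map K.subtype) h.sup_eq_top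
  rw [Subgroup.map_sup, subgroupOf_map_subtype, ← MonoidHom.range_eq_map, range_subtype] at this
  exact this.ge.trans (sup_le_sup_right inf_le_left _)

theorem IsComplement'.map_of_ker_le {G' : Type*} [Group G'] {f : G →* G'}
    (hf : Function.Surjective f) {H K : Subgroup G} (hker : f.ker ≤ H) (h : IsComplement' H K) :
    IsComplement' (H.map f) (K.map f) := by
  refine isComplement'_of_disjoint_and_mul_eq_univ ?_ ?_
  · rw [disjoint_iff_inf_le]
    rintro _ ⟨⟨x, hx, rfl⟩, ⟨y, hy, hxy⟩⟩
    have hyH : y ∈ H := by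
      simpa using H.mul_mem hx (hker (show x⁻¹ * y ∈ f.ker by simp [hxy]))
    have hy1 : y = 1 := disjoint_iff_inf_le.mp h.disjoint ⟨hyH, hy⟩
    rw [← hxy, hy1, map_one]
    exact one_mem _
  · refine Set.eq_univ_of_forall fun z ↦ ?_
    obtain ⟨g, rfl⟩ := hf z
    obtain ⟨⟨x, y⟩, hxy⟩ := h.2 g
    exact ⟨f x, ⟨x, x.2, rfl⟩, f y, ⟨y, y.2, rfl⟩,
      (map_mul f (x : G) y).symm.trans (congrArg f hxy)⟩

theorem isComplement'_subgroupOf_sup {H K : Subgroup G} [H.Normal] (h : Disjoint H K) :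
    IsComplement' (H.subgroupOf (H ⊔ K)) (K.subgroupOf (H ⊔ K)) := by
  refine isComplement'_of_disjoint_and_mul_eq_univ ?_ ?_
  · rw [disjoint_iff_inf_le]
    rintro x ⟨hxH, hxK⟩
    exact Subtype.ext (disjoint_iff_inf_le.mp h ⟨hxH, hxK⟩)
  · refine Set.eq_univ_of_forall fun ⟨x, hx⟩ ↦ ?_
    obtain ⟨y, hy, z, hz, rfl⟩ := mem_sup_of_normal_left.mp hx
    exact ⟨⟨y, mem_sup_left hy⟩, hy, ⟨z, mem_sup_right hz⟩, hz, rfl⟩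

theorem isComplement'_of_disjoint_of_sup_eq_top {H K : Subgroup G} [K.Normal]
    (hd : Disjoint H K) (hs : H ⊔ K = ⊤) : IsComplement' H K :=
  isComplement'_of_disjoint_and_mul_eq_univ hd (by rw [← mul_normal, hs, coe_top])

theorem le_of_le_sup_of_le_map_frattini {P Q M : Subgroup G} [Finite P] [Q.Normal]
    (hQ : Q ≤ (frattini P).map P.subtype) (hP : P ≤ Q ⊔ M) : P ≤ M := by
  have hQP : Q ≤ P := hQ.trans (map_subtype_le _)
  suffices M.subgroupOf P ⊔ frattini P = ⊤ from
    subgroupOf_eq_top.mp (frattini_nongenerating this)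
  refine eq_top_iff.mpr fun x _ ↦ ?_
  obtain ⟨q, hq, m, hm, hqm⟩ := mem_sup_of_normal_left.mp (hP x.2)
  have hmP : m ∈ P := by
    simpa [← hqm] using P.mul_mem (P.inv_mem (hQP hq)) x.2
  rw [show x = ⟨q, hQP hq⟩ * ⟨m, hmP⟩ from Subtype.ext hqm.symm]
  refine mul_mem (mem_sup_right ?_) (mem_sup_left hm)
  obtain ⟨y, hy, rfl⟩ := hQ hq
  exact hy

theorem normalizer_map_le_centralizer_map {G' : Type*} [Group G'] {f : G →* G'}
    (hf : Function.Surjective f) {P : Subgroup G} (hker : f.ker ≤ P) (hcomm : ⁅P, P⁆ ≤ f.ker)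
    (hN : normalizer (P : Set G) ≤ P ⊔ centralizer (P : Set G)) :
    normalizer (P.map f : Set G') ≤ centralizer (P.map f : Set G') := by
  have hmap : normalizer (P.map f : Set G') = (normalizer (P : Set G)).map f := by
    rw [← map_comap_eq_self_of_surjective hf (normalizer _),
      comap_normalizer_eq_of_surjective _ hf, comap_map_eq, sup_eq_left.mpr hker]
  have hab : P.map f ≤ centralizer (P.map f : Set G') := by
    rw [← commutator_eq_bot_iff_le_centralizer, ← map_commutator, ← le_bot_iff,
      map_le_iff_le_comap, MonoidHom.comap_bot]
    exact hcomm
  rw [hmap]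
  calc (normalizer (P : Set G)).map f ≤ (P ⊔ centralizer (P : Set G)).map f := map_mono hN
    _ = P.map f ⊔ (centralizer (P : Set G)).map f := Subgroup.map_sup _ _ _
    _ ≤ centralizer (P.map f : Set G') :=
      sup_le hab ((map_centralizer_le_centralizer_image _ _).trans_eq (by rw [coe_map]))

section Abelian

variable [Finite G] {H : Subgroup G} [H.Normal] [IsMulCommutative H]

theorem exists_stabilizer_quotientDiff_eq {K : Subgroup G}
    (hcop : Nat.Coprime (Nat.card H) H.index) (hK : IsComplement' H K) :
    ∃ α : H.QuotientDiff, stabilizer G α = K := by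
  refine ⟨Quotient.mk'' ⟨K, hK.symm⟩, ?_⟩
  have hK_le : K ≤ stabilizer G (α := H.QuotientDiff) (Quotient.mk'' ⟨K, hK.symm⟩) := by
    intro k hk
    change Quotient.mk'' (MulOpposite.op k⁻¹ • _) = _
    congr 2
    exact Subtype.ext (op_smul_coe_set (K.inv_mem hk))
  refine (eq_of_le_of_card_ge hK_le (le_of_eq ?_)).symm
  exact Nat.eq_of_mul_eq_mul_left Nat.card_pos
    ((isComplement'_stabilizer_of_coprime hcop).card_mul_card.trans hK.card_mul_card.symm)

theorem exists_map_conj_eq_of_isComplement' {K₁ K₂ : Subgroup G}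
    (hcop : Nat.Coprime (Nat.card H) H.index) (h₁ : IsComplement' H K₁)
    (h₂ : IsComplement' H K₂) : ∃ h : H, K₁.map (MulAut.conj (h : G)).toMonoidHom = K₂ := by
  obtain ⟨α₁, rfl⟩ := exists_stabilizer_quotientDiff_eq hcop h₁
  obtain ⟨α₂, rfl⟩ := exists_stabilizer_quotientDiff_eq hcop h₂
  obtain ⟨h, rfl⟩ := exists_smul_eq hcop α₁ α₂
  exact ⟨h, (stabilizer_smul_eq_stabilizer_map_conj (h : G) α₁).symm⟩

end Abelian

theorem exists_map_conj_eq_of_sup_eq [Finite G] {Z K₁ K₂ : Subgroup G} [Z.Normal]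
    [IsMulCommutative Z] (hcop : Nat.Coprime (Nat.card Z) (Nat.card K₁)) (h₁ : Disjoint Z K₁)
    (h₂ : Disjoint Z K₂) (hsup : Z ⊔ K₁ = Z ⊔ K₂) :
    ∃ g : G, K₁.map (MulAut.conj g).toMonoidHom = K₂ := by
  have hc₁ := isComplement'_subgroupOf_sup h₁
  have hc₂ := isComplement'_subgroupOf_sup h₂
  rw [← hsup] at hc₂
  have hcop' :
      Nat.Coprime (Nat.card (Z.subgroupOf (Z ⊔ K₁))) (Z.subgroupOf (Z ⊔ K₁)).index := by
    rwa [hc₁.symm.index_eq_card, card_subgroupOf_of_le le_sup_left,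
      card_subgroupOf_of_le le_sup_right]
  obtain ⟨l, hl⟩ := exists_map_conj_eq_of_isComplement' hcop' hc₁ hc₂
  refine ⟨l, ?_⟩
  have := congrArg (map (Z ⊔ K₁).subtype) hl
  rwa [map_map_conj, subgroupOf_map_subtype, subgroupOf_map_subtype,
    inf_of_le_left le_sup_right, inf_of_le_left (hsup ▸ le_sup_right)] at this

end Subgroup

namespace IsPGroup

variable {p : ℕ} [Fact p.Prime] {G : Type*} [Group G] [Finite G]

theorem coprime_card_of_not_dvd (hG : IsPGroup p G) {n : ℕ} (hn : ¬ p ∣ n) :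
    Nat.Coprime (Nat.card G) n := by
  obtain ⟨k, hk⟩ := hG.exists_card_eq
  exact hk ▸ ((Fact.out : p.Prime).coprime_pow_of_not_dvd hn).symm

theorem exists_map_conj_eq_of_isComplement' {Q K₁ K₂ : Subgroup G} [Q.Normal]
    (hQ : IsPGroup p Q) (hcop : Nat.Coprime (Nat.card Q) Q.index) (h₁ : IsComplement' Q K₁)
    (h₂ : IsComplement' Q K₂) : ∃ g : G, K₁.map (MulAut.conj g).toMonoidHom = K₂ := by
  induction hn : Nat.card G using Nat.strong_induction_on generalizing G with
  | _ n ih =>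
  obtain rfl | hQ_ne := eq_or_ne Q ⊥
  · rw [isComplement'_bot_left.mp h₁, isComplement'_bot_left.mp h₂]
    exact ⟨1, by simp⟩
  have : Nontrivial Q := Q.nontrivial_iff_ne_bot.mpr hQ_ne
  have := hQ.center_nontrivial
  -- `Z = Z(Q)` is a nontrivial abelian normal subgroup of `G`. By induction the complements are
  -- conjugate modulo `Z`, and then the abelian case applies to them inside `Z ⊔ K₂`.
  set Z := (center Q).map Q.subtype
  have hZQ : Z ≤ Q := map_subtype_le _
  have : Nontrivial Z := (equivMapOfInjective _ _ Q.subtype_injective).toEquiv.symm.nontrivial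
  set π := QuotientGroup.mk' Z
  have hπ : Function.Surjective π := QuotientGroup.mk'_surjective Z
  have hker : π.ker ≤ Q := (QuotientGroup.ker_mk' Z).trans_le hZQ
  have hcard : Nat.card (G ⧸ Z) < n := by
    rw [← hn, card_eq_card_quotient_mul_card_subgroup Z]
    exact lt_mul_right Nat.card_pos Finite.one_lt_card
  have hcop' : Nat.Coprime (Nat.card (Q.map π)) (Q.map π).index :=
    index_map_eq Q hπ hker ▸ hcop.coprime_dvd_left (card_map_dvd Q π)
  obtain ⟨g', hg'⟩ := ih _ hcard (hQ.map π) hcop' (h₁.map_of_ker_le hπ hker)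
    (h₂.map_of_ker_le hπ hker) rfl
  obtain ⟨g, rfl⟩ := hπ g'
  have hsup : Z ⊔ K₁.map (MulAut.conj g).toMonoidHom = Z ⊔ K₂ := by
    have := congrArg (comap π) ((map_map_conj π g K₁).trans hg')
    rwa [comap_map_eq, comap_map_eq, QuotientGroup.ker_mk', sup_comm, sup_comm K₂] at this
  have hdisj : Disjoint Z (K₁.map (MulAut.conj g).toMonoidHom) := by
    have := disjoint_map (f := (MulAut.conj g).toMonoidHom) (MulAut.conj g).injective
      h₁.disjoint
    rw [map_conj_eq_self_of_normal] at this
    exact this.mono_left hZQ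
  have hcopZ : Nat.Coprime (Nat.card Z) (Nat.card (K₁.map (MulAut.conj g).toMonoidHom)) := by
    rw [card_map_of_injective (f := (MulAut.conj g).toMonoidHom) (MulAut.conj g).injective,
      ← h₁.symm.index_eq_card]
    exact hcop.coprime_dvd_left (card_dvd_of_le hZQ)
  obtain ⟨z, hz⟩ := exists_map_conj_eq_of_sup_eq hcopZ hdisj (h₂.disjoint.mono_left hZQ) hsup
  exact ⟨z * g, by rw [← map_conj_map_conj, hz]⟩

theorem sup_normalizer_eq_top {Q K : Subgroup G} [Q.Normal] [K.Normal] (hQ : IsPGroup p Q)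
    (hQK : Q ≤ K) (hcop : Nat.Coprime (Nat.card Q) (Q.relIndex K)) {H : Subgroup K}
    (hH : IsComplement' (Q.subgroupOf K) H) : Q ⊔ normalizer (H.map K.subtype) = ⊤ := by
  refine eq_top_iff.mpr fun g _ ↦ ?_
  set φ := MulAut.conjNormal (H := K) g
  have hφQ : (Q.subgroupOf K).map φ.toMonoidHom = Q.subgroupOf K := by
    apply map_injective K.subtype_injective
    rw [map_conjNormal_map_subtype, subgroupOf_map_subtype, inf_of_le_left hQK,
      map_conj_eq_self_of_normal]
  have hφH : IsComplement' (Q.subgroupOf K) (H.map φ.toMonoidHom) := by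
    rw [← hφQ]
    exact hH.map_of_ker_le φ.surjective ((MonoidHom.ker_eq_bot_iff _).mpr φ.injective ▸ bot_le)
  have hQ' : IsPGroup p (Q.subgroupOf K) := hQ.comap_of_injective K.subtype K.subtype_injective
  obtain ⟨k, hk⟩ :=
    hQ'.exists_map_conj_eq_of_isComplement' ((card_subgroupOf_of_le hQK).symm ▸ hcop) hH hφH
  have hkg : (k : G)⁻¹ * g ∈ normalizer (H.map K.subtype) := by
    apply mem_normalizer_of_map_conj_eq
    have := congrArg (Subgroup.map K.subtype) hk
    rwa [map_map_conj, map_conjNormal_map_subtype] at this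
  have hk : (k : G) ∈ Q ⊔ normalizer (H.map K.subtype) :=
    sup_le_sup_left le_normalizer _ (hH.le_sup_map_subtype k.2)
  simpa using mul_mem hk (mem_sup_right hkg)

end IsPGroup

section PNilpotent

variable {p : ℕ} [Fact p.Prime] {G : Type*} [Group G] [Finite G]

theorem Sylow.sup_eq_top_of_index_eq_pow (P : Sylow p G) {K : Subgroup G} {n : ℕ}
    (hK : K.index = p ^ n) : (P : Subgroup G) ⊔ K = ⊤ := by
  have hcop : Nat.Coprime (P : Subgroup G).index (p ^ n) :=
    (Fact.out : p.Prime).coprime_pow_of_not_dvd P.not_dvd_index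
  have h₁ : ((P : Subgroup G) ⊔ K).index ∣ (P : Subgroup G).index :=
    index_dvd_of_le le_sup_left
  have h₂ : ((P : Subgroup G) ⊔ K).index ∣ p ^ n := hK ▸ index_dvd_of_le le_sup_right
  exact index_eq_one.mp (Nat.eq_one_of_dvd_coprimes hcop h₁ h₂)

theorem Sylow.normalizer_le_sup_centralizer (P : Sylow p G)
    (hN : IsPNilpotent p (normalizer (P : Set G))) :
    normalizer (P : Set G) ≤ (P : Subgroup G) ⊔ centralizer (P : Set G) := by
  obtain ⟨PN, K, hK, hPK⟩ := hN
  have := Sylow.unique_of_normal (P.subtype le_normalizer)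
    (by rw [Sylow.coe_subtype]; exact normal_in_normalizer)
  rw [Subsingleton.elim PN (P.subtype le_normalizer), Sylow.coe_subtype] at hPK
  have hKC : K.map (normalizer (P : Set G)).subtype ≤ centralizer (P : Set G) := by
    rintro _ ⟨c, hc, rfl⟩
    exact mem_centralizer_iff.mpr fun x hx ↦ congrArg Subtype.val
      (commute_of_normal_of_disjoint _ _ normal_in_normalizer hK hPK.disjoint
        ⟨x, le_normalizer hx⟩ c hx hc)
  exact hPK.le_sup_map_subtype.trans (sup_le_sup_left hKC _)

theorem isPNilpotent_of_normalizer_le_centralizer (P : Sylow p G)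
    (hP : normalizer (P : Set G) ≤ centralizer (P : Set G)) : IsPNilpotent p G :=
  ⟨P, _, MonoidHom.normal_ker _, (MonoidHom.ker_transferSylow_isComplement' P hP).symm⟩

theorem isPNilpotent_of_le_map_frattini (P : Sylow p G) {Q K : Subgroup G} [Q.Normal]
    [K.Normal] (hQ : Q ≤ (frattini P).map (P : Subgroup G).subtype) (hQK : Q ≤ K)
    (hPK : (P : Subgroup G) ⊔ K = ⊤) (hp : ¬ p ∣ Q.relIndex K) :
    IsPNilpotent p G := by
  have hQP : Q ≤ P := hQ.trans (map_subtype_le _)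
  have hQp : IsPGroup p Q := P.2.to_le hQP
  have hcop : Nat.Coprime (Nat.card Q) (Q.relIndex K) := hQp.coprime_card_of_not_dvd hp
  obtain ⟨H, hH⟩ :=
    exists_right_complement'_of_coprime ((card_subgroupOf_of_le hQK).symm ▸ hcop)
  have hN := hQp.sup_normalizer_eq_top hQK hcop hH
  have hPN : (P : Subgroup G) ≤ normalizer (H.map K.subtype) :=
    le_of_le_sup_of_le_map_frattini hQ (hN ▸ le_top)
  rw [sup_eq_right.mpr (hQP.trans hPN), normalizer_eq_top_iff] at hN
  refine ⟨P, H.map K.subtype, hN,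
    isComplement'_of_disjoint_of_sup_eq_top (disjoint_of_coprime_natCard ?_) ?_⟩
  · rw [card_map_of_injective K.subtype_injective, ← hH.symm.index_eq_card]
    exact P.2.coprime_card_of_not_dvd hp
  · rw [← top_le_iff, ← hPK]
    exact sup_le le_sup_left (hH.le_sup_map_subtype.trans (sup_le_sup_right hQP _))

theorem isPNilpotent_of_isPNilpotent_quotient (P : Sylow p G) {Q : Subgroup G} [Q.Normal]
    (hQ : Q ≤ (frattini P).map (P : Subgroup G).subtype) (h : IsPNilpotent p (G ⧸ Q)) :
    IsPNilpotent p G := by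
  obtain ⟨P', H', hH', hc⟩ := h
  set π := QuotientGroup.mk' Q
  have hπ : Function.Surjective π := QuotientGroup.mk'_surjective Q
  obtain ⟨n, hn⟩ := P'.2.exists_card_eq
  have hK : (H'.comap π).index = p ^ n := by
    rw [index_comap_of_surjective _ hπ, hc.index_eq_card, hn]
  have hQK : Q.relIndex (H'.comap π) = Nat.card H' :=
    calc Q.relIndex (H'.comap π)
        = ((⊥ : Subgroup (G ⧸ Q)).comap π).relIndex (H'.comap π) := by
          rw [MonoidHom.comap_bot, QuotientGroup.ker_mk']
      _ = Nat.card H' := by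
          rw [relIndex_comap, map_comap_eq_self_of_surjective hπ, relIndex_bot_left]
  refine isPNilpotent_of_le_map_frattini P hQ ?_ (P.sup_eq_top_of_index_eq_pow hK) ?_
  · exact (QuotientGroup.ker_mk' Q).ge.trans (MonoidHom.ker_le_comap _ _)
  · rw [hQK, ← hc.symm.index_eq_card]
    exact P'.not_dvd_index

end PNilpotent

theorem navarro_normal_case (p : ℕ) [Fact p.Prime] (G : Type*) [Group G] [Finite G]
    (P : Sylow p G) (Q : Subgroup G) (hQ : Q.Normal)
    (hP' : (commutator ↥(P : Subgroup G)).map (P : Subgroup G).subtype ≤ Q)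
    (hΦ : Q ≤ (frattini ↥(P : Subgroup G)).map (P : Subgroup G).subtype)
    (hN : IsPNilpotent p (Subgroup.normalizer ((P : Subgroup G) : Set G))) :
    IsPNilpotent p G := by
  have hQP : Q ≤ P := hΦ.trans (map_subtype_le _)
  have hπ := QuotientGroup.mk'_surjective Q
  refine isPNilpotent_of_isPNilpotent_quotient P hΦ
    (isPNilpotent_of_normalizer_le_centralizer (P.mapSurjective hπ) ?_)
  exact normalizer_map_le_centralizer_map hπ (by rwa [QuotientGroup.ker_mk'])
    (by rwa [QuotientGroup.ker_mk', ← map_subtype_commutator])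
    (P.normalizer_le_sup_centralizer hN)
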